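/- The functional H attains its minimum over A_H, the minimizer η̄ ∈ A_H is unique, and the minimum value satisfies min { H(η) : η ∈ A_H } < 0. -/

import Mathlib

open MeasureTheory Set Filter

/-- Hypotheses on the function `f₁` from Section 6.1 of the paper. -/
structure F1Hyp (ℓ ℓ₁ : ℝ) (f₁ : ℝ → ℝ) : Prop where
  hl : 0 < ℓ
  hl1 : 0 < ℓ₁
  cont : ContinuousOn f₁ (Icc 0 1)
  diff : ∃ d : ℝ → ℝ, ContinuousOn d (Ioc 0 1) ∧
    ∀ t ∈ Ioc (0:ℝ) 1, HasDerivWithinAt f₁ (d t) (Ioc 0 1) t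
  anti : StrictAntiOn f₁ (Icc 0 1)
  nonneg : ∀ t ∈ Icc (0:ℝ) 1, 0 ≤ f₁ t
  f10 : f₁ 0 = ℓ
  f11 : f₁ 1 = 0
  convexSqrt : ConvexOn ℝ (Icc 0 1) (fun u => f₁ (Real.sqrt u))
  lim0 : Tendsto (fun s => (f₁ s - ℓ + ℓ₁ * s) / s) (nhdsWithin 0 (Ioi 0)) (nhds 0)

/-- `γ` is admissible, with a.e. derivative `γ'` (absolute continuity is encoded by the
fundamental theorem of calculus representation with an `L¹` derivative). -/
def Admissible (γ γ' : ℝ → ℝ) : Prop :=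
  IntegrableOn γ' (Icc 0 1) ∧
  (∀ t ∈ Icc (0:ℝ) 1, γ t = ∫ u in (0:ℝ)..t, γ' u) ∧
  (∀ t ∈ Icc (0:ℝ) 1, 0 ≤ γ t ∧ γ t ≤ 1) ∧
  γ 0 = 0 ∧ γ 1 = 0

/-- The energy in the characterization (6.11). -/
noncomputable def energy (f₁ : ℝ → ℝ) (s : ℝ) (γ γ' : ℝ → ℝ) : ℝ :=
  ∫ t in (0:ℝ)..1, Real.sqrt (s ^ 2 * (f₁ (Real.sqrt (γ t))) ^ 2 + (γ' t) ^ 2 / 4)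

/-- The cohesive energy density of pristine material, via characterization (6.11). -/
noncomputable def g0 (f₁ : ℝ → ℝ) (s : ℝ) : ℝ :=
  sInf {x | ∃ γ γ' : ℝ → ℝ, Admissible γ γ' ∧ x = energy f₁ s γ γ'}


/-- `η` belongs to the class `A_H`, with derivative `η' ∈ L²(0,1)`. -/
def AdmissibleH (η η' : ℝ → ℝ) : Prop :=
  IntegrableOn η' (Icc 0 1) ∧
  IntegrableOn (fun t => (η' t) ^ 2) (Icc 0 1) ∧
  (∀ t ∈ Icc (0:ℝ) 1, η t = ∫ u in (0:ℝ)..t, η' u) ∧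
  (∀ t ∈ Icc (0:ℝ) 1, 0 ≤ η t) ∧
  η 0 = 0 ∧ η 1 = 0

/-- The limit functional `H` of (8.12). -/
noncomputable def Hfun (ℓ ℓ₁ : ℝ) (η η' : ℝ → ℝ) : ℝ :=
  ∫ t in (0:ℝ)..1, (-(ℓ₁ / ℓ) * Real.sqrt (η t) + (η' t) ^ 2 / (8 * ℓ ^ 2))

/-- The infimum of `H` over the class `A_H`. -/
noncomputable def minH (ℓ ℓ₁ : ℝ) : ℝ :=
  sInf {x | ∃ η η' : ℝ → ℝ, AdmissibleH η η' ∧ x = Hfun ℓ ℓ₁ η η'}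

/-!
The Euler–Lagrange equation of `H` is `η'' = -2ℓℓ₁/√η`. Its solution vanishing at `0` and `1` is
explicit: `√η = m (1 - 4w²)` with `32 m³ = 9ℓℓ₁`, where `w(t) ∈ [-1/2, 1/2]` solves
`3w - 4w³ = 2t - 1`, i.e. `w = sin (arcsin (2t - 1) / 3)` by the triple-angle formula.
For admissible `ζ`, concavity of `√` and one integration by parts (the boundary terms vanish with
`ζ - η`) give the calibration inequality `H(ζ) ≥ H(η) + ∫ (ζ' - η')² / (8ℓ²)`. Hence `η` is a
minimizer, and any other minimizer has `ζ' = η'` a.e., so `ζ = η`. Comparing with `ζ = 0` gives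
`H(η) ≤ 0`, and equality would make `0` a second minimizer.
-/

open Real

theorem integral_deriv_mul_eq_sub_of_eq_add_integral {u u' v v' : ℝ → ℝ} {a b : ℝ}
    (hu' : IntervalIntegrable u' volume a b) (hv' : IntervalIntegrable v' volume a b)
    (hu : ∀ x ∈ uIcc a b, u x = u a + ∫ t in a..x, u' t)
    (hv : ∀ x ∈ uIcc a b, v x = v a + ∫ t in a..x, v' t) :
    ∫ x in a..b, u' x * v x + u x * v' x = u b * v b - u a * v a := by
  set U : ℝ → ℝ := fun x => u a + ∫ t in a..x, u' t
  set V : ℝ → ℝ := fun x => v a + ∫ t in a..x, v' t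
  have hU : AbsolutelyContinuousOnInterval U a b :=
    (contDiffOn_const.absolutelyContinuousOnInterval).add
      (hu'.absolutelyContinuousOnInterval_intervalIntegral left_mem_uIcc)
  have hV : AbsolutelyContinuousOnInterval V a b :=
    (contDiffOn_const.absolutelyContinuousOnInterval).add
      (hv'.absolutelyContinuousOnInterval_intervalIntegral left_mem_uIcc)
  have hUu : ∀ x ∈ uIcc a b, U x = u x := fun x hx => (hu x hx).symm
  have hVv : ∀ x ∈ uIcc a b, V x = v x := fun x hx => (hv x hx).symm
  rw [← hUu b right_mem_uIcc, ← hUu a left_mem_uIcc, ← hVv b right_mem_uIcc,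
    ← hVv a left_mem_uIcc, ← hU.integral_deriv_mul_eq_sub hV]
  refine intervalIntegral.integral_congr_ae ?_
  filter_upwards [hu'.ae_hasDerivAt_integral, hv'.ae_hasDerivAt_integral] with x hdu hdv hx
  have hx' := uIoc_subset_uIcc hx
  rw [((hdu hx' a left_mem_uIcc).const_add (u a)).deriv,
    ((hdv hx' a left_mem_uIcc).const_add (v a)).deriv, hUu x hx', hVv x hx']

lemma sqrt_le_sqrt_add_sub_div {x y : ℝ} (hx : 0 < x) (hy : 0 ≤ y) :
    √y ≤ √x + (y - x) / (2 * √x) := by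
  have hsx : 0 < √x := sqrt_pos.2 hx
  rw [← sub_nonneg, show √x + (y - x) / (2 * √x) - √y = (√x - √y) ^ 2 / (2 * √x) by
    field_simp; linear_combination sq_sqrt hx.le - sq_sqrt hy]
  positivity

/-- The integrand of `H` at `(y, q)` dominates its linearization at `(x, p)` along the
Euler–Lagrange equation, up to the exact quadratic remainder in `q`. -/
lemma lagrangian_tangent_le {ℓ ℓ₁ x y p q : ℝ} (hl : 0 < ℓ) (hl1 : 0 ≤ ℓ₁) (hx : 0 < x)
    (hy : 0 ≤ y) :
    -(ℓ₁ / ℓ) * √x + p ^ 2 / (8 * ℓ ^ 2)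
        + (-(2 * ℓ * ℓ₁) / √x * (y - x) + p * (q - p)) / (4 * ℓ ^ 2)
        + (q - p) ^ 2 / (8 * ℓ ^ 2)
      ≤ -(ℓ₁ / ℓ) * √y + q ^ 2 / (8 * ℓ ^ 2) := by
  have hsx : 0 < √x := sqrt_pos.2 hx
  have hrw : -(ℓ₁ / ℓ) * √x + p ^ 2 / (8 * ℓ ^ 2)
        + (-(2 * ℓ * ℓ₁) / √x * (y - x) + p * (q - p)) / (4 * ℓ ^ 2)
        + (q - p) ^ 2 / (8 * ℓ ^ 2)
      = -(ℓ₁ / ℓ) * (√x + (y - x) / (2 * √x)) + q ^ 2 / (8 * ℓ ^ 2) := by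
    field_simp; ring
  rw [hrw, neg_mul, neg_mul]
  gcongr
  exact sqrt_le_sqrt_add_sub_div hx hy

namespace AdmissibleH

variable {ζ ζ' η η' : ℝ → ℝ}

lemma intervalIntegrable (h : AdmissibleH η η') : IntervalIntegrable η' volume 0 1 :=
  (intervalIntegrable_iff_integrableOn_Icc_of_le zero_le_one).2 h.1

lemma memLp_two (h : AdmissibleH η η') : MemLp η' 2 (volume.restrict (Icc 0 1)) :=
  (memLp_two_iff_integrable_sq h.1.aestronglyMeasurable).2 h.2.1

lemma eq_add_integral (h : AdmissibleH η η') :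
    ∀ x ∈ uIcc (0:ℝ) 1, η x = η 0 + ∫ t in (0:ℝ)..x, η' t := by
  intro x hx
  rw [h.2.2.2.2.1, zero_add, h.2.2.1 x (by rwa [uIcc_of_le zero_le_one] at hx)]

lemma continuousOn (h : AdmissibleH η η') : ContinuousOn η (Icc 0 1) := by
  have := intervalIntegral.continuousOn_primitive_interval' h.intervalIntegrable left_mem_uIcc
  rw [uIcc_of_le zero_le_one] at this
  exact this.congr fun x hx => h.2.2.1 x hx

lemma intervalIntegrable_sq_sub (hζ : AdmissibleH ζ ζ') (hη : AdmissibleH η η') :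
    IntervalIntegrable (fun t => (ζ' t - η' t) ^ 2) volume 0 1 :=
  (intervalIntegrable_iff_integrableOn_Icc_of_le zero_le_one).2
    (hζ.memLp_two.sub hη.memLp_two).integrable_sq

lemma eqOn_of_integral_sq_sub_eq_zero (hζ : AdmissibleH ζ ζ') (hη : AdmissibleH η η')
    (h : ∫ t in (0:ℝ)..1, (ζ' t - η' t) ^ 2 = 0) : EqOn ζ η (Icc 0 1) := by
  have hae : ∀ᵐ t, t ∈ Ioc (0:ℝ) 1 → ζ' t = η' t := by
    refine (ae_restrict_iff' measurableSet_Ioc).1 ?_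
    filter_upwards [(intervalIntegral.integral_eq_zero_iff_of_le_of_nonneg_ae zero_le_one
      (ae_of_all _ fun t => sq_nonneg _) (hζ.intervalIntegrable_sq_sub hη)).1 h] with t ht
    exact sub_eq_zero.1 (pow_eq_zero_iff two_ne_zero |>.1 ht)
  intro x hx
  rw [hζ.2.2.1 x hx, hη.2.2.1 x hx]
  refine intervalIntegral.integral_congr_ae ?_
  rw [uIoc_of_le hx.1]
  filter_upwards [hae] with t ht ht' using ht ⟨ht'.1, ht'.2.trans hx.2⟩

end AdmissibleH

lemma admissibleH_zero : AdmissibleH 0 0 := by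
  refine ⟨integrableOn_zero, ?_, fun t _ => ?_, fun t _ => le_rfl, rfl, rfl⟩ <;> simp

lemma Hfun_zero (ℓ ℓ₁ : ℝ) : Hfun ℓ ℓ₁ 0 0 = 0 := by
  simp [Hfun]

structure IsEulerLagrangeSolution (ℓ ℓ₁ : ℝ) (η η' : ℝ → ℝ) : Prop where
  admissibleH : AdmissibleH η η'
  continuousOn_deriv : ContinuousOn η' (Icc 0 1)
  pos : ∀ t ∈ Ioo (0:ℝ) 1, 0 < η t
  hasDerivAt_deriv : ∀ t ∈ Ioo (0:ℝ) 1, HasDerivAt η' (-(2 * ℓ * ℓ₁) / √(η t)) t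

namespace IsEulerLagrangeSolution

variable {ℓ ℓ₁ : ℝ} {η η' ζ ζ' : ℝ → ℝ}

lemma intervalIntegrable_secondDeriv (hsol : IsEulerLagrangeSolution ℓ ℓ₁ η η')
    (h : 0 ≤ ℓ * ℓ₁) : IntervalIntegrable (fun t => -(2 * ℓ * ℓ₁) / √(η t)) volume 0 1 := by
  -- it has constant sign
  have := intervalIntegral.integrableOn_deriv_of_nonneg hsol.continuousOn_deriv.neg
    (fun t ht => (hsol.hasDerivAt_deriv t ht).neg)
    (fun t _ => by rw [neg_div, neg_neg]; exact div_nonneg (by linarith) (sqrt_nonneg _))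
  simpa only [Pi.neg_def, neg_neg] using
    ((intervalIntegrable_iff_integrableOn_Ioc_of_le zero_le_one).2 this).neg

lemma deriv_eq_add_integral (hsol : IsEulerLagrangeSolution ℓ ℓ₁ η η') (h : 0 ≤ ℓ * ℓ₁) :
    ∀ x ∈ uIcc (0:ℝ) 1, η' x = η' 0 + ∫ t in (0:ℝ)..x, -(2 * ℓ * ℓ₁) / √(η t) := by
  intro x hx
  have hx' : x ∈ Icc (0:ℝ) 1 := by rwa [uIcc_of_le zero_le_one] at hx
  rw [intervalIntegral.integral_eq_sub_of_hasDeriv_right_of_le hx'.1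
    (hsol.continuousOn_deriv.mono (Icc_subset_Icc_right hx'.2))
    (fun t ht => (hsol.hasDerivAt_deriv t ⟨ht.1, ht.2.trans_le hx'.2⟩).hasDerivWithinAt)
    ((hsol.intervalIntegrable_secondDeriv h).mono_set (uIcc_subset_uIcc left_mem_uIcc hx))]
  ring

/-- `4ℓ²` times the first variation of `H` at `η` in the direction `ζ - η`. -/
lemma integral_firstVariation_eq_zero (hsol : IsEulerLagrangeSolution ℓ ℓ₁ η η')
    (h : 0 ≤ ℓ * ℓ₁) (hζ : AdmissibleH ζ ζ') :
    ∫ t in (0:ℝ)..1, -(2 * ℓ * ℓ₁) / √(η t) * (ζ t - η t) + η' t * (ζ' t - η' t) = 0 := by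
  have hη := hsol.admissibleH
  have hdiff : ∀ x ∈ uIcc (0:ℝ) 1,
      ζ x - η x = (ζ 0 - η 0) + ∫ t in (0:ℝ)..x, (ζ' t - η' t) := by
    intro x hx
    rw [hζ.eq_add_integral x hx, hη.eq_add_integral x hx, intervalIntegral.integral_sub
      (hζ.intervalIntegrable.mono_set (uIcc_subset_uIcc left_mem_uIcc hx))
      (hη.intervalIntegrable.mono_set (uIcc_subset_uIcc left_mem_uIcc hx))]
    ring
  rw [integral_deriv_mul_eq_sub_of_eq_add_integral (hsol.intervalIntegrable_secondDeriv h)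
    (hζ.intervalIntegrable.sub hη.intervalIntegrable) (hsol.deriv_eq_add_integral h) hdiff]
  simp [hζ.2.2.2.2.1, hζ.2.2.2.2.2, hη.2.2.2.2.1, hη.2.2.2.2.2]

theorem Hfun_add_le (hsol : IsEulerLagrangeSolution ℓ ℓ₁ η η') (hl : 0 < ℓ) (hl1 : 0 ≤ ℓ₁)
    (hζ : AdmissibleH ζ ζ') :
    Hfun ℓ ℓ₁ η η' + (∫ t in (0:ℝ)..1, (ζ' t - η' t) ^ 2) / (8 * ℓ ^ 2) ≤ Hfun ℓ ℓ₁ ζ ζ' := by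
  have h : 0 ≤ ℓ * ℓ₁ := by positivity
  have hη := hsol.admissibleH
  have hζc := hζ.continuousOn
  have hηc := hη.continuousOn
  have hη'c := hsol.continuousOn_deriv
  rw [← uIcc_of_le zero_le_one] at hζc hηc hη'c
  have hI₁ : IntervalIntegrable (fun t => -(ℓ₁ / ℓ) * √(η t) + η' t ^ 2 / (8 * ℓ ^ 2))
      volume 0 1 := ContinuousOn.intervalIntegrable (by fun_prop)
  have hI₂ : IntervalIntegrable
      (fun t => -(2 * ℓ * ℓ₁) / √(η t) * (ζ t - η t) + η' t * (ζ' t - η' t)) volume 0 1 :=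
    ((hsol.intervalIntegrable_secondDeriv h).mul_continuousOn (hζc.sub hηc)).add
      ((hζ.intervalIntegrable.sub hη.intervalIntegrable).continuousOn_mul hη'c)
  have hI₃ := hζ.intervalIntegrable_sq_sub hη
  have hIζ : IntervalIntegrable (fun t => -(ℓ₁ / ℓ) * √(ζ t) + ζ' t ^ 2 / (8 * ℓ ^ 2))
      volume 0 1 :=
    (ContinuousOn.intervalIntegrable (u := fun t => -(ℓ₁ / ℓ) * √(ζ t)) (by fun_prop)).add
      (((intervalIntegrable_iff_integrableOn_Icc_of_le zero_le_one).2 hζ.2.1).div_const _)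
  calc Hfun ℓ ℓ₁ η η' + (∫ t in (0:ℝ)..1, (ζ' t - η' t) ^ 2) / (8 * ℓ ^ 2)
      = ∫ t in (0:ℝ)..1, (-(ℓ₁ / ℓ) * √(η t) + η' t ^ 2 / (8 * ℓ ^ 2)
          + (-(2 * ℓ * ℓ₁) / √(η t) * (ζ t - η t) + η' t * (ζ' t - η' t)) / (4 * ℓ ^ 2)
          + (ζ' t - η' t) ^ 2 / (8 * ℓ ^ 2)) := by
        rw [intervalIntegral.integral_add (hI₁.add (hI₂.div_const _)) (hI₃.div_const _),
          intervalIntegral.integral_add hI₁ (hI₂.div_const _), intervalIntegral.integral_div,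
          intervalIntegral.integral_div, hsol.integral_firstVariation_eq_zero h hζ, Hfun]
        ring
    _ ≤ Hfun ℓ ℓ₁ ζ ζ' :=
        intervalIntegral.integral_mono_on_of_le_Ioo zero_le_one
          ((hI₁.add (hI₂.div_const _)).add (hI₃.div_const _)) hIζ fun t ht =>
            lagrangian_tangent_le hl hl1 (hsol.pos t ht) (hζ.2.2.2.1 t (Ioo_subset_Icc_self ht))

theorem Hfun_le (hsol : IsEulerLagrangeSolution ℓ ℓ₁ η η') (hl : 0 < ℓ) (hl1 : 0 ≤ ℓ₁)
    (hζ : AdmissibleH ζ ζ') : Hfun ℓ ℓ₁ η η' ≤ Hfun ℓ ℓ₁ ζ ζ' := by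
  have := hsol.Hfun_add_le hl hl1 hζ
  have : 0 ≤ (∫ t in (0:ℝ)..1, (ζ' t - η' t) ^ 2) / (8 * ℓ ^ 2) :=
    div_nonneg (intervalIntegral.integral_nonneg zero_le_one fun t _ => sq_nonneg _)
      (by positivity)
  linarith

theorem eqOn_of_Hfun_le (hsol : IsEulerLagrangeSolution ℓ ℓ₁ η η') (hl : 0 < ℓ) (hl1 : 0 ≤ ℓ₁)
    (hζ : AdmissibleH ζ ζ') (hle : Hfun ℓ ℓ₁ ζ ζ' ≤ Hfun ℓ ℓ₁ η η') : EqOn ζ η (Icc 0 1) := by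
  refine hζ.eqOn_of_integral_sq_sub_eq_zero hsol.admissibleH (le_antisymm ?_
    (intervalIntegral.integral_nonneg zero_le_one fun t _ => sq_nonneg _))
  have := hsol.Hfun_add_le hl hl1 hζ
  have : (∫ t in (0:ℝ)..1, (ζ' t - η' t) ^ 2) / (8 * ℓ ^ 2) ≤ 0 := by linarith
  rwa [div_le_iff₀ (by positivity), zero_mul] at this

end IsEulerLagrangeSolution

noncomputable def trisect (t : ℝ) : ℝ := sin (arcsin (2 * t - 1) / 3)

@[fun_prop]
lemma continuous_trisect : Continuous trisect := by
  unfold trisect; fun_prop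

lemma trisect_zero : trisect 0 = -(1 / 2) := by
  rw [trisect, show arcsin (2 * 0 - 1) / 3 = -(π / 6) by norm_num; ring, sin_neg, sin_pi_div_six]

lemma trisect_one : trisect 1 = 1 / 2 := by
  rw [trisect, show arcsin (2 * 1 - 1) / 3 = π / 6 by norm_num; ring, sin_pi_div_six]

lemma sq_trisect_le (t : ℝ) : 4 * trisect t ^ 2 ≤ 1 := by
  have h₁ := arcsin_le_pi_div_two (2 * t - 1)
  have h₂ := neg_pi_div_two_le_arcsin (2 * t - 1)
  have hlo : sin (-(π / 6)) ≤ trisect t :=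
    sin_le_sin_of_le_of_le_pi_div_two (by linarith [pi_pos]) (by linarith) (by linarith)
  have hhi : trisect t ≤ sin (π / 6) :=
    sin_le_sin_of_le_of_le_pi_div_two (by linarith) (by linarith [pi_pos]) (by linarith)
  rw [sin_neg, sin_pi_div_six] at hlo
  rw [sin_pi_div_six] at hhi
  nlinarith

lemma sq_trisect_lt {t : ℝ} (ht : t ∈ Ioo (0:ℝ) 1) : 4 * trisect t ^ 2 < 1 := by
  have h₁ := arcsin_lt_pi_div_two.2 (show 2 * t - 1 < 1 by linarith [ht.2])
  have h₂ := neg_pi_div_two_lt_arcsin.2 (show -1 < 2 * t - 1 by linarith [ht.1])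
  have hlo : sin (-(π / 6)) < trisect t :=
    sin_lt_sin_of_lt_of_le_pi_div_two (by linarith [pi_pos]) (by linarith) (by linarith)
  have hhi : trisect t < sin (π / 6) :=
    sin_lt_sin_of_lt_of_le_pi_div_two (by linarith) (by linarith [pi_pos]) (by linarith)
  rw [sin_neg, sin_pi_div_six] at hlo
  rw [sin_pi_div_six] at hhi
  nlinarith

lemma hasDerivAt_trisect {t : ℝ} (ht : t ∈ Ioo (0:ℝ) 1) :
    HasDerivAt trisect (2 / (3 * (1 - 4 * trisect t ^ 2))) t := by
  set ψ := arcsin (2 * t - 1) / 3 with hψ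
  have harcsin : HasDerivAt (fun s => arcsin (2 * s - 1)) (2 / √(1 - (2 * t - 1) ^ 2)) t := by
    have hlin : HasDerivAt (fun s : ℝ => 2 * s - 1) 2 t := by
      simpa using ((hasDerivAt_id t).const_mul 2).sub_const 1
    have := (hasDerivAt_arcsin (x := 2 * t - 1) (by linarith [ht.1])
      (by linarith [ht.2])).comp t hlin
    exact this.congr_deriv (by ring)
  -- `√(1 - (2t - 1)²) = cos (3ψ) = cos ψ (1 - 4 sin² ψ)`
  have hroot : √(1 - (2 * t - 1) ^ 2) = cos ψ * (1 - 4 * trisect t ^ 2) := by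
    rw [← cos_arcsin, show arcsin (2 * t - 1) = 3 * ψ by rw [hψ]; ring, cos_three_mul, trisect,
      ← hψ]
    linear_combination 4 * cos ψ * sin_sq_add_cos_sq ψ
  have hcos : 0 < cos ψ := by
    apply cos_pos_of_mem_Ioo
    constructor <;> linarith [arcsin_le_pi_div_two (2 * t - 1),
      neg_pi_div_two_le_arcsin (2 * t - 1), pi_pos]
  have hpos := sq_trisect_lt ht
  refine ((hasDerivAt_sin ψ).comp t (harcsin.div_const 3)).congr_deriv ?_
  rw [hroot]
  field_simp

noncomputable def minimizer (m t : ℝ) : ℝ := m ^ 2 * (1 - 4 * trisect t ^ 2) ^ 2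

noncomputable def minimizerDeriv (m t : ℝ) : ℝ := -(32 / 3) * m ^ 2 * trisect t

lemma continuous_minimizer (m : ℝ) : Continuous (minimizer m) := by
  unfold minimizer; fun_prop

lemma continuous_minimizerDeriv (m : ℝ) : Continuous (minimizerDeriv m) := by
  unfold minimizerDeriv; fun_prop

lemma minimizer_zero (m : ℝ) : minimizer m 0 = 0 := by
  norm_num [minimizer, trisect_zero]

lemma minimizer_one (m : ℝ) : minimizer m 1 = 0 := by
  norm_num [minimizer, trisect_one]

lemma minimizer_pos {m t : ℝ} (hm : 0 < m) (ht : t ∈ Ioo (0:ℝ) 1) : 0 < minimizer m t := by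
  have := sq_trisect_lt ht
  unfold minimizer
  have : 0 < 1 - 4 * trisect t ^ 2 := by linarith
  positivity

lemma sqrt_minimizer {m : ℝ} (hm : 0 ≤ m) (t : ℝ) :
    √(minimizer m t) = m * (1 - 4 * trisect t ^ 2) := by
  rw [minimizer, ← mul_pow, sqrt_sq (mul_nonneg hm (by linarith [sq_trisect_le t]))]

lemma hasDerivAt_minimizer (m : ℝ) {t : ℝ} (ht : t ∈ Ioo (0:ℝ) 1) :
    HasDerivAt (minimizer m) (minimizerDeriv m t) t := by
  have hpos : 1 - 4 * trisect t ^ 2 ≠ 0 := by linarith [sq_trisect_lt ht]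
  have := ((((hasDerivAt_trisect ht).pow 2).const_mul 4).const_sub 1 |>.pow 2).const_mul (m ^ 2)
  refine this.congr_deriv ?_
  rw [minimizerDeriv, Pi.pow_apply]
  field_simp
  ring

lemma hasDerivAt_minimizerDeriv {m : ℝ} (hm : 0 < m) {t : ℝ} (ht : t ∈ Ioo (0:ℝ) 1) :
    HasDerivAt (minimizerDeriv m) (-(64 / 9 * m ^ 3) / √(minimizer m t)) t := by
  have hpos : 1 - 4 * trisect t ^ 2 ≠ 0 := by linarith [sq_trisect_lt ht]
  refine ((hasDerivAt_trisect ht).const_mul (-(32 / 3) * m ^ 2)).congr_deriv ?_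
  rw [sqrt_minimizer hm.le]
  field_simp
  ring

lemma admissibleH_minimizer (m : ℝ) : AdmissibleH (minimizer m) (minimizerDeriv m) := by
  refine ⟨(continuous_minimizerDeriv m).integrableOn_Icc,
    ((continuous_minimizerDeriv m).pow 2).integrableOn_Icc, fun t ht => ?_,
    fun t _ => by unfold minimizer; positivity, minimizer_zero m, minimizer_one m⟩
  rw [intervalIntegral.integral_eq_sub_of_hasDeriv_right_of_le ht.1
    (continuous_minimizer m).continuousOn
    (fun x hx => (hasDerivAt_minimizer m ⟨hx.1, hx.2.trans_le ht.2⟩).hasDerivWithinAt)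
    ((continuous_minimizerDeriv m).intervalIntegrable 0 t), minimizer_zero, sub_zero]

theorem exists_isEulerLagrangeSolution {ℓ ℓ₁ : ℝ} (h : 0 < ℓ * ℓ₁) :
    ∃ η η', IsEulerLagrangeSolution ℓ ℓ₁ η η' := by
  set m : ℝ := (9 * (ℓ * ℓ₁) / 32) ^ (3⁻¹ : ℝ)
  have hm : 0 < m := by positivity
  have hm3 : 64 / 9 * m ^ 3 = 2 * ℓ * ℓ₁ := by
    rw [show m ^ 3 = 9 * (ℓ * ℓ₁) / 32 from
      mod_cast rpow_inv_natCast_pow (by positivity) three_ne_zero]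
    ring
  exact ⟨minimizer m, minimizerDeriv m, admissibleH_minimizer m,
    (continuous_minimizerDeriv m).continuousOn, fun t => minimizer_pos hm,
    fun t ht => hm3 ▸ hasDerivAt_minimizerDeriv hm ht⟩

theorem stmt_11 (ℓ ℓ₁ : ℝ) (hl : 0 < ℓ) (hl1 : 0 < ℓ₁) :
    ∃ η η' : ℝ → ℝ, AdmissibleH η η' ∧ Hfun ℓ ℓ₁ η η' = minH ℓ ℓ₁ ∧
      minH ℓ ℓ₁ < 0 ∧
      ∀ ζ ζ' : ℝ → ℝ, AdmissibleH ζ ζ' → Hfun ℓ ℓ₁ ζ ζ' = minH ℓ ℓ₁ →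
        ∀ t ∈ Icc (0:ℝ) 1, ζ t = η t := by
  obtain ⟨η, η', hsol⟩ := exists_isEulerLagrangeSolution (mul_pos hl hl1)
  have hleast : IsLeast {x | ∃ ζ ζ', AdmissibleH ζ ζ' ∧ x = Hfun ℓ ℓ₁ ζ ζ'} (Hfun ℓ ℓ₁ η η') := by
    refine ⟨⟨η, η', hsol.admissibleH, rfl⟩, ?_⟩
    rintro _ ⟨ζ, ζ', hζ, rfl⟩
    exact hsol.Hfun_le hl hl1.le hζ
  have hmin : Hfun ℓ ℓ₁ η η' = minH ℓ ℓ₁ := hleast.csInf_eq.symm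
  refine ⟨η, η', hsol.admissibleH, hmin, ?_, fun ζ ζ' hζ hζmin =>
    hsol.eqOn_of_Hfun_le hl hl1.le hζ (hζmin.trans hmin.symm).le⟩
  rw [← hmin]
  refine ((hsol.Hfun_le hl hl1.le admissibleH_zero).trans_eq (Hfun_zero ℓ ℓ₁)).lt_of_ne ?_
  intro hzero
  -- otherwise the zero function would be a second minimizer
  have hhalf : (1 / 2 : ℝ) ∈ Ioo 0 1 := by norm_num
  have := hsol.eqOn_of_Hfun_le hl hl1.le admissibleH_zero (by rw [Hfun_zero, hzero])
    (Ioo_subset_Icc_self hhalf)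
  exact (hsol.pos _ hhalf).ne this
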